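/- arXiv:2006.02732 — 3 statements merged into one kernel-verified Lean document; each statement's English description precedes it below -/
import Mathlib

section
/- For jointly distributed discrete random variables X and Y with joint pmf p(x,y), marginals p(x), p(y), and any variational conditional distribution q(y|x) (with q(y|x) > 0 wherever p(x,y) > 0), the mutual information satisfies the variational lower bound I(X;Y) ≥ H(Y) + E_{p(x,y)}[log q(y|x)], where H(Y) is the Shannon entropy of Y. -/
open Real Finset

/-!
Writing `r(x,y) = p(x) q(y|x)`, the gap `I(X;Y) - H(Y) - E[log q(Y|X)]` equals
`∑ p(x,y) log (p(x,y) / r(x,y))`, the Kullback–Leibler divergence of `p` from `r`.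
Since `r` has the same total mass as `p`, Gibbs' inequality `a - b ≤ a log (a / b)`,
summed over all `(x,y)`, shows that this divergence is nonnegative.
-/

lemma sub_le_mul_log_div {a b : ℝ} (ha : 0 ≤ a) (hb : 0 ≤ b) (hab : 0 < a → 0 < b) :
    a - b ≤ a * log (a / b) := by
  rcases ha.eq_or_lt with rfl | ha
  · simpa using hb
  have hb := hab ha
  have h := one_sub_inv_le_log_of_pos (div_pos ha hb)
  rw [inv_div] at h
  calc a - b = a * (1 - b / a) := by field_simp
    _ ≤ a * log (a / b) := by gcongr

lemma mul_log_div_mul_eq {p a b c : ℝ} (h : p ≠ 0 → a ≠ 0 ∧ b ≠ 0 ∧ c ≠ 0) :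
    p * log (p / (a * b)) = p * log (p / (a * c)) - p * log b + p * log c := by
  rcases eq_or_ne p 0 with rfl | hp
  · simp
  obtain ⟨ha, hb, hc⟩ := h hp
  rw [log_div hp (mul_ne_zero ha hb), log_div hp (mul_ne_zero ha hc), log_mul ha hb,
    log_mul ha hc]
  ring

theorem mutual_info_variational_lower_bound_general
    {X Y : Type} [Fintype X] [Fintype Y]
    (p : X → Y → ℝ) (q : X → Y → ℝ)
    (hp_nonneg : ∀ x y, 0 ≤ p x y)
    (hq_nonneg : ∀ x y, 0 ≤ q x y)
    (hq_sum : ∀ x, ∑ y, q x y = 1)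
    (hq_pos : ∀ x y, 0 < p x y → 0 < q x y)
    (pX : X → ℝ) (hpX : ∀ x, pX x = ∑ y, p x y)
    (pY : Y → ℝ) (hpY : ∀ y, pY y = ∑ x, p x y)
    (I HY : ℝ)
    (hI : I = ∑ x, ∑ y, p x y * Real.log (p x y / (pX x * pY y)))
    (hHY : HY = -∑ y, pY y * Real.log (pY y)) :
    I ≥ HY + ∑ x, ∑ y, p x y * Real.log (q x y) := by
  subst hI hHY
  have hpX_ge (x y) : p x y ≤ pX x := hpX x ▸ single_le_sum (fun y _ ↦ hp_nonneg x y) (mem_univ y)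
  have hpY_ge (x y) : p x y ≤ pY y := hpY y ▸ single_le_sum (fun x _ ↦ hp_nonneg x y) (mem_univ x)
  have hentropy : ∑ y, pY y * log (pY y) = ∑ x, ∑ y, p x y * log (pY y) := by
    simp_rw [hpY, sum_mul]
    exact sum_comm
  have hsplit (x y) : p x y * log (p x y / (pX x * pY y)) =
      p x y * log (p x y / (pX x * q x y)) - p x y * log (pY y) + p x y * log (q x y) := by
    refine mul_log_div_mul_eq fun hp ↦ ?_
    have hp := (hp_nonneg x y).lt_of_ne' hp
    exact ⟨(hp.trans_le (hpX_ge x y)).ne', (hp.trans_le (hpY_ge x y)).ne', (hq_pos x y hp).ne'⟩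
  have hgibbs : ∑ x, ∑ y, (p x y - pX x * q x y) ≤
      ∑ x, ∑ y, p x y * log (p x y / (pX x * q x y)) := by
    gcongr with x _ y _
    refine sub_le_mul_log_div (hp_nonneg x y)
      (mul_nonneg ((hp_nonneg x y).trans (hpX_ge x y)) (hq_nonneg x y)) fun hp ↦ ?_
    exact mul_pos (hp.trans_le (hpX_ge x y)) (hq_pos x y hp)
  have hmass : ∑ x, ∑ y, (p x y - pX x * q x y) = 0 := by
    simp [sum_sub_distrib, ← mul_sum, hq_sum, hpX]
  rw [hmass] at hgibbs
  rw [hentropy]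
  simp_rw [hsplit, sum_add_distrib, sum_sub_distrib]
  linarith

/-- variational lower bound on mutual information:
`I(X;Y) ≥ H(Y) + E_{p(x,y)}[log q(y|x)]`. -/
theorem mutual_info_variational_lower_bound
    {X Y : Type} [Fintype X] [Fintype Y]
    (p : X → Y → ℝ) (q : X → Y → ℝ)
    (hp_nonneg : ∀ x y, 0 ≤ p x y)
    (hp_sum : ∑ x, ∑ y, p x y = 1)
    (hq_nonneg : ∀ x y, 0 ≤ q x y)
    (hq_sum : ∀ x, ∑ y, q x y = 1)
    (hq_pos : ∀ x y, 0 < p x y → 0 < q x y)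
    (pX : X → ℝ) (hpX : ∀ x, pX x = ∑ y, p x y)
    (pY : Y → ℝ) (hpY : ∀ y, pY y = ∑ x, p x y)
    (I HY : ℝ)
    (hI : I = ∑ x, ∑ y, p x y * Real.log (p x y / (pX x * pY y)))
    (hHY : HY = -∑ y, pY y * Real.log (pY y)) :
    I ≥ HY + ∑ x, ∑ y, p x y * Real.log (q x y) :=
  mutual_info_variational_lower_bound_general p q hp_nonneg hq_nonneg hq_sum hq_pos pX hpX pY hpY I
    HY hI hHY
end

section
/- By symmetry of mutual information, I(X;Y) is bounded below by (1/2)[H(X) + H(Y) + E_{p(x,y)}(log q₁(x|y) + log q₂(y|x))] for any variational conditional distributions q₁(x|y) and q₂(y|x) positive on the relevant supports. -/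
open Real

lemma aux_gibbs {X Y : Type} [Fintype X] [Fintype Y]
    (p : X → Y → ℝ)
    (hp_nonneg : ∀ x y, 0 ≤ p x y)
    (hp_sum : ∑ x, ∑ y, p x y = 1)
    (pY : Y → ℝ) (hpY : ∀ y, pY y = ∑ x, p x y)
    (q1 : Y → X → ℝ)
    (hq1_nonneg : ∀ y x, 0 ≤ q1 y x) (hq1_sum : ∀ y, ∑ x, q1 y x = 1)
    (hq1_pos : ∀ x y, 0 < p x y → 0 < q1 y x) :
    ∑ x, ∑ y, p x y * Real.log (q1 y x * pY y / p x y) ≤ 0 := by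
  have hpY_nonneg : ∀ y, 0 ≤ pY y := fun y => by
    rw [hpY]; exact Finset.sum_nonneg fun x _ => hp_nonneg x y
  have hterm : ∀ x y, p x y * Real.log (q1 y x * pY y / p x y)
      ≤ q1 y x * pY y - p x y := by
    intro x y
    rcases eq_or_lt_of_le (hp_nonneg x y) with h0 | hpos
    · rw [← h0]
      simp [mul_nonneg (hq1_nonneg y x) (hpY_nonneg y)]
    · have hq : 0 < q1 y x := hq1_pos x y hpos
      have hpYpos : 0 < pY y := by
        rw [hpY]
        exact lt_of_lt_of_le hpos
          (Finset.single_le_sum (fun x _ => hp_nonneg x y) (Finset.mem_univ x))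
      have ht : 0 < q1 y x * pY y / p x y := by positivity
      have hlog := Real.log_le_sub_one_of_pos ht
      have := mul_le_mul_of_nonneg_left hlog (le_of_lt hpos)
      calc p x y * Real.log (q1 y x * pY y / p x y)
          ≤ p x y * (q1 y x * pY y / p x y - 1) := this
        _ = q1 y x * pY y - p x y := by field_simp
  calc ∑ x, ∑ y, p x y * Real.log (q1 y x * pY y / p x y)
      ≤ ∑ x, ∑ y, (q1 y x * pY y - p x y) := by
        apply Finset.sum_le_sum; intro x _
        exact Finset.sum_le_sum fun y _ => hterm x y
    _ = (∑ x, ∑ y, q1 y x * pY y) - 1 := by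
        rw [← hp_sum]; rw [← Finset.sum_sub_distrib]
        exact Finset.sum_congr rfl fun x _ => by rw [← Finset.sum_sub_distrib]
    _ = 0 := by
        have : ∑ x, ∑ y, q1 y x * pY y = ∑ y, (∑ x, q1 y x) * pY y := by
          rw [Finset.sum_comm]
          exact Finset.sum_congr rfl fun y _ => by rw [Finset.sum_mul]
        rw [this]
        have : ∑ y, (∑ x, q1 y x) * pY y = ∑ y, pY y := by
          exact Finset.sum_congr rfl fun y _ => by rw [hq1_sum y, one_mul]
        rw [this]
        have : ∑ y, pY y = 1 := by
          rw [← hp_sum, Finset.sum_comm]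
          exact Finset.sum_congr rfl fun y _ => hpY y
        rw [this]; ring

/-- symmetric variational lower bound
`I(X;Y) ≥ (1/2)[H(X) + H(Y) + E_{p(x,y)}(log q₁(x|y) + log q₂(y|x))]`. -/
theorem mutual_info_symmetric_variational_lower_bound
    {X Y : Type} [Fintype X] [Fintype Y]
    (p : X → Y → ℝ)
    (hp_nonneg : ∀ x y, 0 ≤ p x y)
    (hp_sum : ∑ x, ∑ y, p x y = 1)
    (pX : X → ℝ) (hpX : ∀ x, pX x = ∑ y, p x y)
    (pY : Y → ℝ) (hpY : ∀ y, pY y = ∑ x, p x y)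
    (q1 : Y → X → ℝ) (q2 : X → Y → ℝ)
    (hq1_nonneg : ∀ y x, 0 ≤ q1 y x) (hq1_sum : ∀ y, ∑ x, q1 y x = 1)
    (hq2_nonneg : ∀ x y, 0 ≤ q2 x y) (hq2_sum : ∀ x, ∑ y, q2 x y = 1)
    (hq1_pos : ∀ x y, 0 < p x y → 0 < q1 y x)
    (hq2_pos : ∀ x y, 0 < p x y → 0 < q2 x y)
    (I HX HY : ℝ)
    (hI : I = ∑ x, ∑ y, p x y * Real.log (p x y / (pX x * pY y)))
    (hHX : HX = -∑ x, pX x * Real.log (pX x))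
    (hHY : HY = -∑ y, pY y * Real.log (pY y)) :
    I ≥ (1 / 2) * (HX + HY +
      ∑ x, ∑ y, p x y * (Real.log (q1 y x) + Real.log (q2 x y))) := by
  have hA := aux_gibbs p hp_nonneg hp_sum pY hpY q1 hq1_nonneg hq1_sum hq1_pos
  have hp_sum' : ∑ y, ∑ x, p x y = 1 := by rw [Finset.sum_comm]; exact hp_sum
  have hB := aux_gibbs (fun y x => p x y) (fun y x => hp_nonneg x y) hp_sum'
      pX hpX q2 hq2_nonneg hq2_sum (fun y x h => hq2_pos x y h)
  -- hB : ∑ y, ∑ x, p x y * log (q2 x y * pX x / p x y) ≤ 0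
  rw [Finset.sum_comm] at hB
  -- positivity of marginals on support
  have hpX_pos : ∀ x y, 0 < p x y → 0 < pX x := fun x y h => by
    rw [hpX]
    exact lt_of_lt_of_le h (Finset.single_le_sum (fun y _ => hp_nonneg x y) (Finset.mem_univ y))
  have hpY_pos : ∀ x y, 0 < p x y → 0 < pY y := fun x y h => by
    rw [hpY]
    exact lt_of_lt_of_le h (Finset.single_le_sum (fun x _ => hp_nonneg x y) (Finset.mem_univ x))
  -- termwise identity
  have hterm : ∀ x y,
      2 * (p x y * Real.log (p x y / (pX x * pY y)))
      + p x y * Real.log (q1 y x * pY y / p x y)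
      + p x y * Real.log (q2 x y * pX x / p x y)
      + p x y * Real.log (pX x) + p x y * Real.log (pY y)
      = p x y * (Real.log (q1 y x) + Real.log (q2 x y)) := by
    intro x y
    rcases eq_or_lt_of_le (hp_nonneg x y) with h0 | hpos
    · rw [← h0]; ring
    · have hX' := hpX_pos x y hpos
      have hY' := hpY_pos x y hpos
      have hq1' := hq1_pos x y hpos
      have hq2' := hq2_pos x y hpos
      rw [Real.log_div (by positivity) (by positivity),
          Real.log_mul hX'.ne' hY'.ne',
          Real.log_div (by positivity) hpos.ne',
          Real.log_mul hq1'.ne' hY'.ne',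
          Real.log_div (by positivity) hpos.ne',
          Real.log_mul hq2'.ne' hX'.ne']
      ring
  -- sum the identity
  have hsum : ∑ x, ∑ y, (2 * (p x y * Real.log (p x y / (pX x * pY y)))
      + p x y * Real.log (q1 y x * pY y / p x y)
      + p x y * Real.log (q2 x y * pX x / p x y)
      + p x y * Real.log (pX x) + p x y * Real.log (pY y))
      = ∑ x, ∑ y, p x y * (Real.log (q1 y x) + Real.log (q2 x y)) := by
    exact Finset.sum_congr rfl fun x _ =>
      Finset.sum_congr rfl fun y _ => hterm x y
  -- split the left-hand side
  simp only [Finset.sum_add_distrib] at hsum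
  have e1 : ∑ x, ∑ y, 2 * (p x y * Real.log (p x y / (pX x * pY y))) = 2 * I := by
    rw [hI, Finset.mul_sum]
    exact Finset.sum_congr rfl fun x _ => by rw [Finset.mul_sum]
  have e2 : ∑ x, ∑ y, p x y * Real.log (pX x) = -HX := by
    rw [hHX, neg_neg]
    refine Finset.sum_congr rfl fun x _ => ?_
    rw [hpX, Finset.sum_mul]
  have e3 : ∑ x, ∑ y, p x y * Real.log (pY y) = -HY := by
    rw [hHY, neg_neg, Finset.sum_comm]
    refine Finset.sum_congr rfl fun y _ => ?_
    rw [hpY, Finset.sum_mul]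
  rw [e1, e2, e3] at hsum
  linarith
end

section
/- Iterating the one-step improvement inequality: in a finite discounted MDP, if a policy π_new and bounded fixed point Q^{π_old} satisfy E_{a∼π_new(·|s)}[Q^{π_old}(s,a) + c_new(s,a)] ≥ V^{π_old}(s) for all s, where V^{π_old}(s) = E_{a∼π_old(·|s)}[Q^{π_old}(s,a) + c_old(s,a)], then the value of π_new with augmentation c_new satisfies Q^{π_new}(s,a) ≥ Q^{π_old}(s,a) for all (s,a). -/
/-- iterating the one-step improvement inequality. If the fixed points
`Q^{π_old}` (augmentation `c_old`) and `Q^{π_new}` (augmentation `c_new`) satisfy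
`E_{a∼π_new(·|s)}[Q^{π_old}(s,a) + c_new(s,a)] ≥ V^{π_old}(s)` for all `s`, then
`Q^{π_new}(s,a) ≥ Q^{π_old}(s,a)` for all `(s,a)`. -/
theorem iterated_one_step_improvement
    {S A : Type} [Fintype S] [Fintype A] [Nonempty S] [Nonempty A]
    (γ : ℝ) (hγ : 0 ≤ γ ∧ γ < 1)
    (r : S → A → ℝ)
    (P : S → A → S → ℝ)
    (hP_nonneg : ∀ s a s', 0 ≤ P s a s') (hP_sum : ∀ s a, ∑ s', P s a s' = 1)
    (polOld polNew : S → A → ℝ)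
    (hpolOld_nonneg : ∀ s a, 0 ≤ polOld s a) (hpolOld_sum : ∀ s, ∑ a, polOld s a = 1)
    (hpolNew_nonneg : ∀ s a, 0 ≤ polNew s a) (hpolNew_sum : ∀ s, ∑ a, polNew s a = 1)
    (cOld cNew : S → A → ℝ)
    (Qold Qnew : S × A → ℝ)
    -- Qold is the fixed point of the operator under (polOld, cOld)
    (hQold : ∀ s a, Qold (s, a) =
      r s a + γ * ∑ s', P s a s' * ∑ a', polOld s' a' * (Qold (s', a') + cOld s' a'))
    -- Qnew is the fixed point of the operator under (polNew, cNew)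
    (hQnew : ∀ s a, Qnew (s, a) =
      r s a + γ * ∑ s', P s a s' * ∑ a', polNew s' a' * (Qnew (s', a') + cNew s' a'))
    -- V^{π_old}
    (Vold : S → ℝ)
    (hVold : ∀ s, Vold s = ∑ a, polOld s a * (Qold (s, a) + cOld s a))
    -- one-step improvement inequality
    (himp : ∀ s, Vold s ≤ ∑ a, polNew s a * (Qold (s, a) + cNew s a)) :
    ∀ s a, Qold (s, a) ≤ Qnew (s, a) := by
  set D : S × A → ℝ := fun sa => Qold sa - Qnew sa with hD
  obtain ⟨x, -, hx⟩ := Finset.exists_max_image (Finset.univ : Finset (S × A)) D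
    ⟨Classical.arbitrary _, Finset.mem_univ _⟩
  set M : ℝ := D x with hM
  -- key pointwise bound: D (s,a) ≤ γ * M
  have key : ∀ s a, D (s, a) ≤ γ * M := by
    intro s a
    have h1 : D (s, a) = γ * ∑ s', P s a s' *
        ((∑ a', polOld s' a' * (Qold (s', a') + cOld s' a')) -
         (∑ a', polNew s' a' * (Qnew (s', a') + cNew s' a'))) := by
      simp only [hD, hQold s a, hQnew s a, mul_sub, Finset.sum_sub_distrib]
      ring
    rw [h1]
    have h2 : ∀ s', (∑ a', polOld s' a' * (Qold (s', a') + cOld s' a')) -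
         (∑ a', polNew s' a' * (Qnew (s', a') + cNew s' a')) ≤ M := by
      intro s'
      have := himp s'
      rw [hVold s'] at this
      have h3 : (∑ a', polNew s' a' * (Qold (s', a') + cNew s' a')) -
          (∑ a', polNew s' a' * (Qnew (s', a') + cNew s' a')) =
          ∑ a', polNew s' a' * D (s', a') := by
        rw [← Finset.sum_sub_distrib]
        apply Finset.sum_congr rfl
        intro a' _
        simp only [hD]; ring
      have h4 : ∑ a', polNew s' a' * D (s', a') ≤ ∑ a', polNew s' a' * M := by
        apply Finset.sum_le_sum
        intro a' _
        exact mul_le_mul_of_nonneg_left (hx _ (Finset.mem_univ _)) (hpolNew_nonneg s' a')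
      rw [← Finset.sum_mul, hpolNew_sum s', one_mul] at h4
      linarith
    calc γ * ∑ s', P s a s' *
        ((∑ a', polOld s' a' * (Qold (s', a') + cOld s' a')) -
         (∑ a', polNew s' a' * (Qnew (s', a') + cNew s' a')))
        ≤ γ * ∑ s', P s a s' * M := by
          apply mul_le_mul_of_nonneg_left _ hγ.1
          apply Finset.sum_le_sum
          intro s' _
          exact mul_le_mul_of_nonneg_left (h2 s') (hP_nonneg s a s')
      _ = γ * M := by rw [← Finset.sum_mul, hP_sum s a, one_mul]
  have hMle : M ≤ γ * M := by
    obtain ⟨s, a⟩ := x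
    exact key s a
  have hM0 : M ≤ 0 := by nlinarith [hγ.1, hγ.2]
  intro s a
  have := le_trans (key s a) (by nlinarith [hγ.1] : γ * M ≤ 0)
  simp only [hD] at this
  linarith
end
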